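/- arXiv:2601.12065 — 4 statements merged into one kernel-verified Lean document; each statement's English description precedes it below -/
import Mathlib

section
/- For every a > 0, every u = (u₁,u₂,u₃) ∈ ℝ³ and every angle φ ∈ ℝ, the characteristic polynomial of the real 3×3 matrix a⁻¹·Q̂[u] equals (X − λ₁(u))·(X − λ₂(u))·(X − λ₃(u)); in particular λ₁(u), λ₂(u), λ₃(u) are exactly the eigenvalues (with multiplicity) of a⁻¹·Q̂[u], and λ₁(u) + λ₂(u) + λ₃(u) = 0. -/
open Polynomial

noncomputable def M₁ : Matrix (Fin 3) (Fin 3) ℝ :=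
  (1 / Real.sqrt 2) • !![0, 0, 1; 0, 0, 0; 1, 0, 0]
noncomputable def M₂ : Matrix (Fin 3) (Fin 3) ℝ :=
  (1 / Real.sqrt 2) • !![0, 1, 0; 1, 0, 0; 0, 0, 0]
noncomputable def M₃ : Matrix (Fin 3) (Fin 3) ℝ :=
  (1 / Real.sqrt 2) • !![0, 0, 0; 0, 0, 1; 0, 1, 0]
noncomputable def M₄ : Matrix (Fin 3) (Fin 3) ℝ :=
  (1 / Real.sqrt 6) • !![-1, 0, 0; 0, -1, 0; 0, 0, 2]
noncomputable def M₅ : Matrix (Fin 3) (Fin 3) ℝ :=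
  (1 / Real.sqrt 2) • !![1, 0, 0; 0, -1, 0; 0, 0, 0]

/-- The axially symmetric `Q`-tensor ansatz `Q̂[u]`. -/
noncomputable def Qhat (a u₁ u₂ u₃ φ : ℝ) : Matrix (Fin 3) (Fin 3) ℝ :=
  (a / Real.sqrt 2) •
    (u₁ • (Real.cos (2 * φ) • M₅ + Real.sin (2 * φ) • M₂) + u₂ • M₄ +
      u₃ • (Real.cos φ • M₁ + Real.sin φ • M₃))

/-- `D(u) = √((u₁ − √3 u₂)² + 4 u₃²)`. -/
noncomputable def Dq (u₁ u₂ u₃ : ℝ) : ℝ :=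
  Real.sqrt ((u₁ - Real.sqrt 3 * u₂) ^ 2 + 4 * u₃ ^ 2)

noncomputable def lam₁ (u₁ u₂ u₃ : ℝ) : ℝ :=
  -(1 / 2) * (u₁ + u₂ / Real.sqrt 3)
noncomputable def lam₂ (u₁ u₂ u₃ : ℝ) : ℝ :=
  (1 / 4) * ((u₁ + u₂ / Real.sqrt 3) - Dq u₁ u₂ u₃)
noncomputable def lam₃ (u₁ u₂ u₃ : ℝ) : ℝ :=
  (1 / 4) * ((u₁ + u₂ / Real.sqrt 3) + Dq u₁ u₂ u₃)

set_option maxHeartbeats 1600000 in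
/-- The characteristic polynomial of `a⁻¹ Q̂[u]` factors as
`(X − λ₁)(X − λ₂)(X − λ₃)`, so `λ₁, λ₂, λ₃` are exactly its eigenvalues with
multiplicity, and they sum to zero. -/
theorem stmt0 (a u₁ u₂ u₃ φ : ℝ) (ha : 0 < a) :
    (a⁻¹ • Qhat a u₁ u₂ u₃ φ).charpoly =
      (X - C (lam₁ u₁ u₂ u₃)) * (X - C (lam₂ u₁ u₂ u₃)) * (X - C (lam₃ u₁ u₂ u₃)) ∧
    lam₁ u₁ u₂ u₃ + lam₂ u₁ u₂ u₃ + lam₃ u₁ u₂ u₃ = 0 := by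
  have h2 : Real.sqrt 2 * Real.sqrt 2 = 2 := Real.mul_self_sqrt (by norm_num)
  have h3 : Real.sqrt 3 * Real.sqrt 3 = 3 := Real.mul_self_sqrt (by norm_num)
  have h6 : Real.sqrt 6 = Real.sqrt 2 * Real.sqrt 3 := by
    rw [← Real.sqrt_mul (by norm_num)]; norm_num
  have h2ne : Real.sqrt 2 ≠ 0 := by positivity
  have h3ne : Real.sqrt 3 ≠ 0 := by positivity
  have hane : a ≠ 0 := ha.ne'
  have h2p : Real.sqrt 2 ^ 2 = 2 := Real.sq_sqrt (by norm_num)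
  have h3p : Real.sqrt 3 ^ 2 = 3 := Real.sq_sqrt (by norm_num)
  have h2c : Real.sqrt 2 ^ 3 = 2 * Real.sqrt 2 := by rw [pow_succ, h2p]
  obtain ⟨v, rfl⟩ : ∃ v, u₂ = Real.sqrt 3 * v := ⟨u₂ / Real.sqrt 3, by field_simp⟩
  have hvv : Real.sqrt 3 * v / Real.sqrt 3 = v := by field_simp
  have hm : a⁻¹ • Qhat a u₁ (Real.sqrt 3 * v) u₃ φ =
      !![u₁ * Real.cos (2*φ) / 2 - v / 2, u₁ * Real.sin (2*φ) / 2, u₃ * Real.cos φ / 2;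
         u₁ * Real.sin (2*φ) / 2, -(u₁ * Real.cos (2*φ) / 2) - v / 2, u₃ * Real.sin φ / 2;
         u₃ * Real.cos φ / 2, u₃ * Real.sin φ / 2, v] := by
    unfold Qhat M₁ M₂ M₃ M₄ M₅
    ext i j
    fin_cases i <;> fin_cases j <;>
      simp [Matrix.smul_apply, Matrix.add_apply, h6] <;>
      field_simp <;> ring_nf <;>
      simp [h2p, h3p, h2c] <;> ring
  have hD : Dq u₁ (Real.sqrt 3 * v) u₃ ^ 2 = (u₁ - 3 * v) ^ 2 + 4 * u₃ ^ 2 := by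
    rw [Dq, Real.sq_sqrt (by positivity), ← mul_assoc, h3]
  constructor
  · rw [hm, Matrix.charpoly, Matrix.det_fin_three]
    apply Polynomial.funext
    intro x
    simp [Matrix.charmatrix_apply, Matrix.diagonal_apply, Fin.ext_iff]
    rw [lam₁, lam₂, lam₃, hvv, Real.cos_two_mul, Real.sin_two_mul]
    have hpy : Real.sin φ ^ 2 + Real.cos φ ^ 2 = 1 := Real.sin_sq_add_cos_sq φ
    linear_combination ((1:ℝ)/32 * v + 1/32 * u₁ + 1/16 * x) * hD +
      (-(1:ℝ)/8 * v * u₃ ^ 2 - 1/8 * u₁ * u₃ ^ 2 - 1/4 * u₁ * u₃ ^ 2 * Real.cos φ ^ 2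
        + u₁ ^ 2 * v * Real.cos φ ^ 2 - 1/4 * x * u₃ ^ 2
        - x * u₁ ^ 2 * Real.cos φ ^ 2) * hpy
  · rw [lam₁, lam₂, lam₃]; ring
end

section
/- Let a > 0, φ ∈ ℝ, and u = (u₁,u₂,u₃) ∈ ℝ³ with D(u) > 0. Define n(u,φ) := (√2/2)·(1 + (u₁ − √3·u₂)/D(u))·e_ρ + (√2·u₃/D(u))·e_z ∈ ℝ³, where e_ρ = (cos φ, sin φ, 0) and e_z = (0,0,1). Then (a⁻¹·Q̂[u])·n(u,φ) = λ₃(u)·n(u,φ); moreover n(u,φ) = 0 if and only if u₃ = 0 and u₁ − √3·u₂ < 0, so in all other cases n(u,φ) is an eigenvector of a⁻¹·Q̂[u] for the eigenvalue λ₃(u). -/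
open Matrix

lemma Qhat_eq (a u₁ u₂ u₃ φ : ℝ) : Qhat a u₁ u₂ u₃ φ = a •
    !![u₁ * Real.cos (2*φ) / 2 - u₂ / (2 * Real.sqrt 3), u₁ * Real.sin (2*φ) / 2, u₃ * Real.cos φ / 2;
       u₁ * Real.sin (2*φ) / 2, -(u₁ * Real.cos (2*φ) / 2) - u₂ / (2 * Real.sqrt 3), u₃ * Real.sin φ / 2;
       u₃ * Real.cos φ / 2, u₃ * Real.sin φ / 2, u₂ / Real.sqrt 3] := by
  have h2 : Real.sqrt 2 ^ 2 = 2 := Real.sq_sqrt (by norm_num)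
  have h6 : Real.sqrt 6 = Real.sqrt 2 * Real.sqrt 3 := by
    rw [← Real.sqrt_mul (by norm_num)]; norm_num
  have h2p : (0:ℝ) < Real.sqrt 2 := by positivity
  have h3p : (0:ℝ) < Real.sqrt 3 := by positivity
  ext i j
  have h3 : Real.sqrt 3 ^ 2 = 3 := Real.sq_sqrt (by norm_num)
  fin_cases i <;> fin_cases j <;>
    simp [Qhat, M₁, M₂, M₃, M₄, M₅, h6] <;>
    field_simp <;>
    ring_nf <;>
    simp only [show (Real.sqrt 2)^3 = 2 * Real.sqrt 2 by rw [pow_succ, h2],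
      show (Real.sqrt 3)^3 = 3 * Real.sqrt 3 by rw [pow_succ, h3], h2, h3] <;>
    ring_nf

lemma key1 (u₁ u₂ u₃ : ℝ) (hD : 0 < Dq u₁ u₂ u₃) :
    (u₁ - u₂ / Real.sqrt 3)/2 * (Real.sqrt 2 / 2 * (1 + (u₁ - Real.sqrt 3 * u₂) / Dq u₁ u₂ u₃))
      + u₃/2 * (Real.sqrt 2 * u₃ / Dq u₁ u₂ u₃)
    = lam₃ u₁ u₂ u₃ * (Real.sqrt 2 / 2 * (1 + (u₁ - Real.sqrt 3 * u₂) / Dq u₁ u₂ u₃)) := by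
  set D := Dq u₁ u₂ u₃ with hDdef
  have hD2 : D ^ 2 = (u₁ - Real.sqrt 3 * u₂) ^ 2 + 4 * u₃ ^ 2 := by
    rw [hDdef, Dq]; exact Real.sq_sqrt (by positivity)
  have h3 : Real.sqrt 3 ^ 2 = 3 := Real.sq_sqrt (by norm_num)
  have h3p : (0:ℝ) < Real.sqrt 3 := by positivity
  rw [lam₃, ← hDdef]
  field_simp
  linear_combination (-2*Real.sqrt 3) * hD2 + (2*u₂*(D + u₁ - u₂*Real.sqrt 3)) * h3

lemma key2 (u₁ u₂ u₃ : ℝ) (hD : 0 < Dq u₁ u₂ u₃) :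
    u₃/2 * (Real.sqrt 2 / 2 * (1 + (u₁ - Real.sqrt 3 * u₂) / Dq u₁ u₂ u₃))
      + u₂ / Real.sqrt 3 * (Real.sqrt 2 * u₃ / Dq u₁ u₂ u₃)
    = lam₃ u₁ u₂ u₃ * (Real.sqrt 2 * u₃ / Dq u₁ u₂ u₃) := by
  set D := Dq u₁ u₂ u₃ with hDdef
  have hD2 : D ^ 2 = (u₁ - Real.sqrt 3 * u₂) ^ 2 + 4 * u₃ ^ 2 := by
    rw [hDdef, Dq]; exact Real.sq_sqrt (by positivity)
  have h3 : Real.sqrt 3 ^ 2 = 3 := Real.sq_sqrt (by norm_num)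
  have h3p : (0:ℝ) < Real.sqrt 3 := by positivity
  rw [lam₃, ← hDdef]
  field_simp
  linear_combination (-4*u₃*u₂) * h3

/-- The `n`-field `n(u,φ) = (√2/2)(1 + (u₁−√3u₂)/D(u)) e_ρ + (√2 u₃/D(u)) e_z`
satisfies `(a⁻¹ Q̂[u]) n = λ₃(u) n`; moreover `n = 0` iff `u₃ = 0` and
`u₁ − √3 u₂ < 0`, so in all other cases `n` is an eigenvector of `a⁻¹ Q̂[u]`
for the eigenvalue `λ₃(u)`. -/
theorem stmt5 (a u₁ u₂ u₃ φ : ℝ) (ha : 0 < a) (hD : 0 < Dq u₁ u₂ u₃)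
    (n : Fin 3 → ℝ)
    (hn : n = (Real.sqrt 2 / 2 * (1 + (u₁ - Real.sqrt 3 * u₂) / Dq u₁ u₂ u₃)) •
        ![Real.cos φ, Real.sin φ, 0] +
      (Real.sqrt 2 * u₃ / Dq u₁ u₂ u₃) • ![0, 0, 1]) :
    (a⁻¹ • Qhat a u₁ u₂ u₃ φ) *ᵥ n = lam₃ u₁ u₂ u₃ • n ∧
    (n = 0 ↔ u₃ = 0 ∧ u₁ - Real.sqrt 3 * u₂ < 0) ∧
    (¬ (u₃ = 0 ∧ u₁ - Real.sqrt 3 * u₂ < 0) → n ≠ 0) := by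
  have hk1 := key1 u₁ u₂ u₃ hD
  have hk2 := key2 u₁ u₂ u₃ hD
  have hpyt := Real.sin_sq_add_cos_sq φ
  constructor
  · rw [Qhat_eq, smul_smul, inv_mul_cancel₀ ha.ne', one_smul, hn]
    funext i
    fin_cases i <;>
      simp [mulVec, dotProduct, Fin.sum_univ_three, Real.cos_two_mul, Real.sin_two_mul]
    · linear_combination Real.cos φ * hk1 +
        ((Real.sqrt 2 / 2 * (1 + (u₁ - Real.sqrt 3 * u₂) / Dq u₁ u₂ u₃)) * u₁ * Real.cos φ) * hpyt
    · linear_combination Real.sin φ * hk1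
    · linear_combination hk2 +
        (u₃ * (Real.sqrt 2 / 2 * (1 + (u₁ - Real.sqrt 3 * u₂) / Dq u₁ u₂ u₃)) / 2) * hpyt
  · have hiff : (n = 0 ↔ u₃ = 0 ∧ u₁ - Real.sqrt 3 * u₂ < 0) := by
      have hpyt := Real.sin_sq_add_cos_sq φ
      constructor
      · intro h0
        have h2 := congrFun h0 2
        have e0 := congrFun h0 0
        have e1 := congrFun h0 1
        rw [hn] at h2 e0 e1
        simp at h2 e0 e1
        have hu3 : u₃ = 0 := h2.resolve_right hD.ne'
        have h1 : 1 + (u₁ - Real.sqrt 3 * u₂) / Dq u₁ u₂ u₃ = 0 := by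
          rcases e0 with h | hc
          · exact h
          rcases e1 with h | hs
          · exact h
          · rw [hc, hs] at hpyt; norm_num at hpyt
        have hsD : u₁ - Real.sqrt 3 * u₂ = -(Dq u₁ u₂ u₃) := by
          field_simp at h1
          linarith
        exact ⟨hu3, by rw [hsD]; linarith⟩
      · rintro ⟨hu3, hlt⟩
        subst hu3
        have hDs : Dq u₁ u₂ 0 = -(u₁ - Real.sqrt 3 * u₂) := by
          rw [Dq]
          simp [Real.sqrt_sq_eq_abs, abs_of_neg hlt]
        have hne : u₁ - Real.sqrt 3 * u₂ ≠ 0 := ne_of_lt hlt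
        rw [hn, hDs]
        funext i
        fin_cases i <;> simp <;>
          (left
           have h' : Real.sqrt 3 * u₂ - u₁ ≠ 0 := fun h => hne (by linarith)
           field_simp
           ring)
    exact ⟨hiff, fun h hn0 => h (hiff.mp hn0)⟩
end

section
/- Let A be a real symmetric 3×3 matrix with trace zero. Then √6·|tr(A³)| ≤ (tr(A²))^{3/2}, with equality attained (e.g. for A = diag(−1,−1,2)/√6). -/
open Matrix

lemma key_ineq (x y z : ℝ) (h : x + y + z = 0) :
    6 * (x^3 + y^3 + z^3)^2 ≤ (x^2 + y^2 + z^2)^3 := by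
  have hz : z = -x - y := by linarith
  subst hz
  nlinarith [mul_nonneg (sq_nonneg (x-y)) (sq_nonneg (x*y + 2*(x+y)^2))]

lemma trace_pow_eq (A : Matrix (Fin 3) (Fin 3) ℝ) (hA : A.IsHermitian) (k : ℕ) :
    (A ^ k).trace = ∑ i, hA.eigenvalues i ^ k := by
  set U : Matrix (Fin 3) (Fin 3) ℝ := (hA.eigenvectorUnitary : Matrix (Fin 3) (Fin 3) ℝ)
  have hU : U ∈ Matrix.unitaryGroup (Fin 3) ℝ := (hA.eigenvectorUnitary).2
  have hU1 : U * star U = 1 := (Matrix.mem_unitaryGroup_iff).mp hU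
  have hU2 : star U * U = 1 := (Matrix.mem_unitaryGroup_iff').mp hU
  set D : Matrix (Fin 3) (Fin 3) ℝ := diagonal (RCLike.ofReal ∘ hA.eigenvalues)
  have hspec : A = U * D * star U := hA.spectral_theorem
  have key : A ^ k = U * D ^ k * star U := by
    induction k with
    | zero => simp [hU1]
    | succ n ih =>
      rw [pow_succ, ih, hspec, pow_succ]
      rw [show U * D ^ n * star U * (U * D * star U)
          = U * D ^ n * (star U * U) * D * star U by noncomm_ring]
      rw [hU2]
      noncomm_ring
  rw [key, Matrix.trace_mul_cycle, hU2, Matrix.one_mul,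
    Matrix.diagonal_pow, Matrix.trace_diagonal]
  simp

/-- For a real symmetric traceless `3 × 3` matrix `A`,
`√6 |tr(A³)| ≤ (tr(A²))^{3/2}`, and equality is attained, e.g. for
`A = diag(−1,−1,2)/√6`. -/
theorem stmt8 (A : Matrix (Fin 3) (Fin 3) ℝ) (hsymm : Aᵀ = A) (htr : A.trace = 0) :
    Real.sqrt 6 * |(A ^ 3).trace| ≤ ((A ^ 2).trace) ^ ((3 : ℝ) / 2) ∧
    Real.sqrt 6 *
        |((((Real.sqrt 6)⁻¹ • !![(-1 : ℝ), 0, 0; 0, -1, 0; 0, 0, 2]) ^ 3).trace)| =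
      (((((Real.sqrt 6)⁻¹ • !![(-1 : ℝ), 0, 0; 0, -1, 0; 0, 0, 2]) ^ 2)).trace) ^
        ((3 : ℝ) / 2) := by
  constructor
  · have hA : A.IsHermitian := by
      rw [Matrix.IsHermitian]
      ext i j
      simpa [Matrix.conjTranspose_apply] using congrFun (congrFun hsymm i) j
    set x := hA.eigenvalues 0
    set y := hA.eigenvalues 1
    set z := hA.eigenvalues 2
    have h1 : A.trace = x + y + z := by
      have := trace_pow_eq A hA 1
      simpa [Fin.sum_univ_three] using this
    have hsum : x + y + z = 0 := by rw [← h1]; exact htr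
    have h2 : (A ^ 2).trace = x^2 + y^2 + z^2 := by
      simpa [Fin.sum_univ_three] using trace_pow_eq A hA 2
    have h3 : (A ^ 3).trace = x^3 + y^3 + z^3 := by
      simpa [Fin.sum_univ_three] using trace_pow_eq A hA 3
    have hS2 : (0:ℝ) ≤ x^2 + y^2 + z^2 := by positivity
    rw [h2, h3]
    have hrhs : (x^2 + y^2 + z^2) ^ ((3:ℝ)/2) = Real.sqrt ((x^2+y^2+z^2)^3) := by
      rw [Real.sqrt_eq_rpow, ← Real.rpow_natCast (x^2+y^2+z^2) 3,
        ← Real.rpow_mul hS2]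
      norm_num
    have hlhs : Real.sqrt 6 * |x^3 + y^3 + z^3| = Real.sqrt (6 * (x^3+y^3+z^3)^2) := by
      rw [Real.sqrt_mul (by norm_num), Real.sqrt_sq_eq_abs]
    rw [hrhs, hlhs]
    exact Real.sqrt_le_sqrt (key_ineq x y z hsum)
  · have hs : Real.sqrt 6 ^ 2 = 6 := Real.sq_sqrt (by norm_num)
    have hspos : (0:ℝ) < Real.sqrt 6 := Real.sqrt_pos.mpr (by norm_num)
    set c : ℝ := (Real.sqrt 6)⁻¹
    have hc : (0:ℝ) < c := inv_pos.mpr hspos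
    set M0 : Matrix (Fin 3) (Fin 3) ℝ := !![(-1 : ℝ), 0, 0; 0, -1, 0; 0, 0, 2]
    have hM2 : (M0 ^ 2).trace = 6 := by
      rw [pow_two]
      norm_num [M0, Matrix.mul_fin_three, Matrix.trace_fin_three, Fin.isValue, Matrix.cons_val_two]
    have hM3 : (M0 ^ 3).trace = 6 := by
      rw [pow_succ, pow_two]
      simp [M0, Matrix.trace, Fin.sum_univ_three]
      norm_num
    rw [smul_pow, smul_pow, Matrix.trace_smul, Matrix.trace_smul, hM2, hM3]
    have h2 : c ^ 2 • (6:ℝ) = 1 := by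
      simp only [smul_eq_mul, c, inv_pow, hs]
      norm_num
    have h3 : Real.sqrt 6 * |c ^ 3 • (6:ℝ)| = 1 := by
      rw [abs_of_pos (by positivity)]
      simp only [smul_eq_mul, c, inv_pow]
      rw [pow_succ, hs]
      field_simp
    rw [h2, h3, Real.one_rpow]
end

section
/- Let u = (u₁,u₂,u₃) : (0,∞) × ℝ → ℝ³ be continuously differentiable, and define w : {x = (x₁,x₂,x₃) ∈ ℝ³ : x₁² + x₂² > 0} → ℝ⁵ by w(x) := (u₁(ρ,x₃)·cos 2φ, u₁(ρ,x₃)·sin 2φ, u₂(ρ,x₃), u₃(ρ,x₃)·cos φ, u₃(ρ,x₃)·sin φ), where ρ := √(x₁²+x₂²) and (cos φ, sin φ) := (x₁/ρ, x₂/ρ). Then w is continuously differentiable and at every such x: Σ_{i=1}⁵ ‖∇w_i(x)‖² = ‖∂_ρ u(ρ,x₃)‖² + ‖∂_z u(ρ,x₃)‖² + (4·u₁(ρ,x₃)² + u₃(ρ,x₃)²)/ρ². -/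
open Set

/-- The cylindrical radius `ρ(x) = √(x₁² + x₂²)` of a point of `ℝ³`. -/
noncomputable def rad (x : EuclideanSpace ℝ (Fin 3)) : ℝ :=
  Real.sqrt ((x 0) ^ 2 + (x 1) ^ 2)

noncomputable abbrev pr (i : Fin 3) : EuclideanSpace ℝ (Fin 3) →L[ℝ] ℝ := EuclideanSpace.proj i

noncomputable def Ader (x : EuclideanSpace ℝ (Fin 3)) : EuclideanSpace ℝ (Fin 3) →L[ℝ] ℝ :=
  (1 / (2 * rad x)) • ((x 0 • pr 0 + x 0 • pr 0) + (x 1 • pr 1 + x 1 • pr 1))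

theorem hqfd (x : EuclideanSpace ℝ (Fin 3)) :
    HasFDerivAt (fun y : EuclideanSpace ℝ (Fin 3) => (y 0)^2 + (y 1)^2)
      ((x 0 • pr 0 + x 0 • pr 0) + (x 1 • pr 1 + x 1 • pr 1)) x := by
  have h0 := (pr 0).hasFDerivAt (x := x)
  have h1 := (pr 1).hasFDerivAt (x := x)
  simp only [pow_two]; exact (h0.mul h0).add (h1.mul h1)

theorem hradfd (x : EuclideanSpace ℝ (Fin 3)) (hx : 0 < (x 0)^2 + (x 1)^2) :
    HasFDerivAt rad (Ader x) x :=
  (Real.hasDerivAt_sqrt hx.ne').comp_hasFDerivAt x (hqfd x)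

set_option maxHeartbeats 2000000 in
theorem keylem (x0 x1 r P1 P2 P3 Q1 Q2 Q3 f1 f3 : ℝ) (hr : r ≠ 0)
    (h : r^2 = x0^2 + x1^2) :
    (P1*x0*(x0^2-x1^2)/r^3 + 2*f1*x0*(r^2-x0^2+x1^2)/r^4)^2 + (P1*x1*(x0^2-x1^2)/r^3 - 2*f1*x1*(r^2+x0^2-x1^2)/r^4)^2 + (Q1*(x0^2-x1^2)/r^2)^2 + (2*P1*x0^2*x1/r^3 + 2*f1*x1*(r^2-2*x0^2)/r^4)^2 + (2*P1*x0*x1^2/r^3 + 2*f1*x0*(r^2-2*x1^2)/r^4)^2 + (2*Q1*x0*x1/r^2)^2 + (P2*x0/r)^2 + (P2*x1/r)^2 + (Q2)^2 + (P3*x0^2/r^2 + f3*(r^2-x0^2)/r^3)^2 + (P3*x0*x1/r^2 - f3*x0*x1/r^3)^2 + (Q3*x0/r)^2 + (P3*x0*x1/r^2 - f3*x0*x1/r^3)^2 + (P3*x1^2/r^2 + f3*(r^2-x1^2)/r^3)^2 + (Q3*x1/r)^2 =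
    (P1^2 + P2^2 + P3^2) + (Q1^2 + Q2^2 + Q3^2) + (4*f1^2 + f3^2)/r^2 := by
  have h8 : (r:ℝ)^8 ≠ 0 := pow_ne_zero 8 hr
  have hL : ((P1*x0*(x0^2-x1^2)/r^3 + 2*f1*x0*(r^2-x0^2+x1^2)/r^4)^2 + (P1*x1*(x0^2-x1^2)/r^3 - 2*f1*x1*(r^2+x0^2-x1^2)/r^4)^2 + (Q1*(x0^2-x1^2)/r^2)^2 + (2*P1*x0^2*x1/r^3 + 2*f1*x1*(r^2-2*x0^2)/r^4)^2 + (2*P1*x0*x1^2/r^3 + 2*f1*x0*(r^2-2*x1^2)/r^4)^2 + (2*Q1*x0*x1/r^2)^2 + (P2*x0/r)^2 + (P2*x1/r)^2 + (Q2)^2 + (P3*x0^2/r^2 + f3*(r^2-x0^2)/r^3)^2 + (P3*x0*x1/r^2 - f3*x0*x1/r^3)^2 + (Q3*x0/r)^2 + (P3*x0*x1/r^2 - f3*x0*x1/r^3)^2 + (P3*x1^2/r^2 + f3*(r^2-x1^2)/r^3)^2 + (Q3*x1/r)^2) * r^8 = 2*r^6*f3^2 + r^8*Q2^2 - 2*x1^2*r^4*f3^2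 + 8*x1^2*r^4*f1^2 + 2*x1^2*r^5*P3*f3 + x1^2*r^6*Q3^2 + x1^2*r^6*P2^2 + x1^4*r^2*f3^2 - 8*x1^4*r^2*f1^2 - 2*x1^4*r^3*P3*f3 + 4*x1^4*r^3*P1*f1 + x1^4*r^4*Q1^2 + x1^4*r^4*P3^2 + 4*x1^6*f1^2 - 4*x1^6*r*P1*f1 + x1^6*r^2*P1^2 - 2*x0^2*r^4*f3^2 + 8*x0^2*r^4*f1^2 + 2*x0^2*r^5*P3*f3 + x0^2*r^6*Q3^2 + x0^2*r^6*P2^2 + 2*x0^2*x1^2*r^2*f3^2 - 16*x0^2*x1^2*r^2*f1^2 - 4*x0^2*x1^2*r^3*P3*f3 + 8*x0^2*x1^2*r^3*P1*f1 + 2*x0^2*x1^2*r^4*Q1^2 + 2*x0^2*x1^2*r^4*P3^2 + 12*x0^2*x1^4*f1^2 - 12*x0^2*x1^4*r*P1*f1 + 3*x0^2*x1^4*r^2*P1^2 + x0^4*r^2*f3^2 - 8*x0^4*r^2*f1^2 - 2*x0^4*r^3*P3*f3 + 4*x0^4*r^3*P1*f1 + x0^4*r^4*Q1^2 + x0^4*r^4*P3^2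 + 12*x0^4*x1^2*f1^2 - 12*x0^4*x1^2*r*P1*f1 + 3*x0^4*x1^2*r^2*P1^2 + 4*x0^6*f1^2 - 4*x0^6*r*P1*f1 + x0^6*r^2*P1^2 := by
    field_simp
    ring
  have hR : ((P1^2 + P2^2 + P3^2) + (Q1^2 + Q2^2 + Q3^2) + (4*f1^2 + f3^2)/r^2) * r^8 = r^6*f3^2 + 4*r^6*f1^2 + r^8*Q3^2 + r^8*Q2^2 + r^8*Q1^2 + r^8*P3^2 + r^8*P2^2 + r^8*P1^2 := by
    field_simp
    ring
  have hPP : (2*r^6*f3^2 + r^8*Q2^2 - 2*x1^2*r^4*f3^2 + 8*x1^2*r^4*f1^2 + 2*x1^2*r^5*P3*f3 + x1^2*r^6*Q3^2 + x1^2*r^6*P2^2 + x1^4*r^2*f3^2 - 8*x1^4*r^2*f1^2 - 2*x1^4*r^3*P3*f3 + 4*x1^4*r^3*P1*f1 + x1^4*r^4*Q1^2 + x1^4*r^4*P3^2 + 4*x1^6*f1^2 - 4*x1^6*r*P1*f1 + x1^6*r^2*P1^2 - 2*x0^2*r^4*f3^2 + 8*x0^2*r^4*f1^2 + 2*x0^2*r^5*P3*f3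 + x0^2*r^6*Q3^2 + x0^2*r^6*P2^2 + 2*x0^2*x1^2*r^2*f3^2 - 16*x0^2*x1^2*r^2*f1^2 - 4*x0^2*x1^2*r^3*P3*f3 + 8*x0^2*x1^2*r^3*P1*f1 + 2*x0^2*x1^2*r^4*Q1^2 + 2*x0^2*x1^2*r^4*P3^2 + 12*x0^2*x1^4*f1^2 - 12*x0^2*x1^4*r*P1*f1 + 3*x0^2*x1^4*r^2*P1^2 + x0^4*r^2*f3^2 - 8*x0^4*r^2*f1^2 - 2*x0^4*r^3*P3*f3 + 4*x0^4*r^3*P1*f1 + x0^4*r^4*Q1^2 + x0^4*r^4*P3^2 + 12*x0^4*x1^2*f1^2 - 12*x0^4*x1^2*r*P1*f1 + 3*x0^4*x1^2*r^2*P1^2 + 4*x0^6*f1^2 - 4*x0^6*r*P1*f1 + x0^6*r^2*P1^2 : ℝ) = r^6*f3^2 + 4*r^6*f1^2 + r^8*Q3^2 + r^8*Q2^2 + r^8*Q1^2 + r^8*P3^2 + r^8*P2^2 + r^8*P1^2 := by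
    linear_combination (r^4*f3^2 - 4*r^4*f1^2 - 1*r^6*Q3^2 - 1*r^6*Q1^2 - 1*r^6*P3^2 - 1*r^6*P2^2 - 1*r^6*P1^2 - 1*x1^2*r^2*f3^2 + 4*x1^2*r^2*f1^2 + 2*x1^2*r^3*P3*f3 - 1*x1^2*r^4*Q1^2 - 1*x1^2*r^4*P3^2 - 1*x1^2*r^4*P1^2 - 4*x1^4*f1^2 + 4*x1^4*r*P1*f1 - 1*x1^4*r^2*P1^2 - 1*x0^2*r^2*f3^2 + 4*x0^2*r^2*f1^2 + 2*x0^2*r^3*P3*f3 - 1*x0^2*r^4*Q1^2 - 1*x0^2*r^4*P3^2 - 1*x0^2*r^4*P1^2 - 8*x0^2*x1^2*f1^2 + 8*x0^2*x1^2*r*P1*f1 - 2*x0^2*x1^2*r^2*P1^2 - 4*x0^4*f1^2 + 4*x0^4*r*P1*f1 - 1*x0^4*r^2*P1^2) * h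
  exact mul_right_cancel₀ h8 (by rw [hL, hR, hPP])

theorem part1 (u₁ u₂ u₃ : ℝ → ℝ → ℝ)
    (hu : ContDiffOn ℝ 1
      (fun p : ℝ × ℝ => (![u₁ p.1 p.2, u₂ p.1 p.2, u₃ p.1 p.2] : Fin 3 → ℝ))
      (Ioi (0 : ℝ) ×ˢ (univ : Set ℝ)))
    (W : EuclideanSpace ℝ (Fin 3) → EuclideanSpace ℝ (Fin 5))
    (hW : ∀ x : EuclideanSpace ℝ (Fin 3),
      W x = ![u₁ (rad x) (x 2) * ((x 0 / rad x) ^ 2 - (x 1 / rad x) ^ 2),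
              u₁ (rad x) (x 2) * (2 * (x 0 / rad x) * (x 1 / rad x)),
              u₂ (rad x) (x 2),
              u₃ (rad x) (x 2) * (x 0 / rad x),
              u₃ (rad x) (x 2) * (x 1 / rad x)]) :
    ContDiffOn ℝ 1 W {x : EuclideanSpace ℝ (Fin 3) | 0 < (x 0) ^ 2 + (x 1) ^ 2} := by
  intro x hx
  apply ContDiffAt.contDiffWithinAt
  have hx' : 0 < (x 0) ^ 2 + (x 1) ^ 2 := hx
  have hρ : 0 < rad x := Real.sqrt_pos.2 hx'
  have hopen : IsOpen (Ioi (0:ℝ) ×ˢ (univ : Set ℝ)) := isOpen_Ioi.prod isOpen_univ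
  have hmem : ((rad x, x 2) : ℝ × ℝ) ∈ Ioi (0:ℝ) ×ˢ (univ : Set ℝ) := ⟨hρ, trivial⟩
  have hC : ContDiffAt ℝ 1 (fun p : ℝ × ℝ =>
      (![u₁ p.1 p.2, u₂ p.1 p.2, u₃ p.1 p.2] : Fin 3 → ℝ)) (rad x, x 2) :=
    hu.contDiffAt (hopen.mem_nhds hmem)
  have hC1 : ContDiffAt ℝ 1 (fun p : ℝ × ℝ => u₁ p.1 p.2) (rad x, x 2) := by
    simpa [Function.comp_def] using (ContinuousLinearMap.proj (R := ℝ) (φ := fun _ : Fin 3 => ℝ)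
      0).contDiff.contDiffAt.comp (rad x, x 2) hC
  have hC2 : ContDiffAt ℝ 1 (fun p : ℝ × ℝ => u₂ p.1 p.2) (rad x, x 2) := by
    simpa [Function.comp_def] using (ContinuousLinearMap.proj (R := ℝ) (φ := fun _ : Fin 3 => ℝ)
      1).contDiff.contDiffAt.comp (rad x, x 2) hC
  have hC3 : ContDiffAt ℝ 1 (fun p : ℝ × ℝ => u₃ p.1 p.2) (rad x, x 2) := by
    simpa [Function.comp_def] using (ContinuousLinearMap.proj (R := ℝ) (φ := fun _ : Fin 3 => ℝ)
      2).contDiff.contDiffAt.comp (rad x, x 2) hC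
  have hqC : ContDiffAt ℝ 1 (fun y : EuclideanSpace ℝ (Fin 3) => (y 0)^2 + (y 1)^2) x := by
    have h0 := (pr 0).contDiff (𝕜 := ℝ) (n := (1:ℕ∞))
    have h1 := (pr 1).contDiff (𝕜 := ℝ) (n := (1:ℕ∞))
    simpa [pow_two] using ((h0.mul h0).add (h1.mul h1)).contDiffAt
  have hradC : ContDiffAt ℝ 1 rad x :=
    (Real.contDiffAt_sqrt hx'.ne').comp x hqC
  have h2C : ContDiffAt ℝ 1 (fun y : EuclideanSpace ℝ (Fin 3) => y 2) x :=
    ((pr 2).contDiff (𝕜 := ℝ) (n := (1:ℕ∞))).contDiffAt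
  have hpairC : ContDiffAt ℝ 1 (fun y : EuclideanSpace ℝ (Fin 3) => ((rad y, y 2) : ℝ × ℝ)) x :=
    hradC.prodMk h2C
  have hu1C : ContDiffAt ℝ 1 (fun y : EuclideanSpace ℝ (Fin 3) => u₁ (rad y) (y 2)) x :=
    hC1.comp (g := fun p : ℝ × ℝ => u₁ p.1 p.2) x hpairC
  have hu2C : ContDiffAt ℝ 1 (fun y : EuclideanSpace ℝ (Fin 3) => u₂ (rad y) (y 2)) x :=
    hC2.comp (g := fun p : ℝ × ℝ => u₂ p.1 p.2) x hpairC
  have hu3C : ContDiffAt ℝ 1 (fun y : EuclideanSpace ℝ (Fin 3) => u₃ (rad y) (y 2)) x :=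
    hC3.comp (g := fun p : ℝ × ℝ => u₃ p.1 p.2) x hpairC
  have hcC : ContDiffAt ℝ 1 (fun y : EuclideanSpace ℝ (Fin 3) => y 0 / rad y) x :=
    ContDiffAt.div (((pr 0).contDiff (𝕜 := ℝ) (n := (1:ℕ∞))).contDiffAt) hradC hρ.ne'
  have hsC : ContDiffAt ℝ 1 (fun y : EuclideanSpace ℝ (Fin 3) => y 1 / rad y) x :=
    ContDiffAt.div (((pr 1).contDiff (𝕜 := ℝ) (n := (1:ℕ∞))).contDiffAt) hradC hρ.ne'
  rw [contDiffAt_piLp]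
  intro i
  fin_cases i
  · have e : (fun y => W y 0) = fun y : EuclideanSpace ℝ (Fin 3) =>
        u₁ (rad y) (y 2) * ((y 0 / rad y) * (y 0 / rad y) - (y 1 / rad y) * (y 1 / rad y)) := by
      funext y; rw [hW y]; simp [pow_two]
    simpa [e] using hu1C.mul ((hcC.mul hcC).sub (hsC.mul hsC))
  · have e : (fun y => W y 1) = fun y : EuclideanSpace ℝ (Fin 3) =>
        u₁ (rad y) (y 2) * (2 * (y 0 / rad y) * (y 1 / rad y)) := by
      funext y; rw [hW y]; simp
    simpa [e] using hu1C.mul ((hcC.const_smul (2:ℝ)).mul hsC)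
  · have e : (fun y => W y 2) = fun y : EuclideanSpace ℝ (Fin 3) => u₂ (rad y) (y 2) := by
      funext y; rw [hW y]; simp
    simpa [e] using hu2C
  · have e : (fun y => W y 3) = fun y : EuclideanSpace ℝ (Fin 3) =>
        u₃ (rad y) (y 2) * (y 0 / rad y) := by
      funext y; rw [hW y]; simp
    simpa [e] using hu3C.mul hcC
  · have e : (fun y => W y 4) = fun y : EuclideanSpace ℝ (Fin 3) =>
        u₃ (rad y) (y 2) * (y 1 / rad y) := by
      funext y; rw [hW y]; simp
    simpa [e] using hu3C.mul hsC

set_option maxHeartbeats 2000000 in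
theorem part2 (u₁ u₂ u₃ : ℝ → ℝ → ℝ)
    (hu : ContDiffOn ℝ 1
      (fun p : ℝ × ℝ => (![u₁ p.1 p.2, u₂ p.1 p.2, u₃ p.1 p.2] : Fin 3 → ℝ))
      (Ioi (0 : ℝ) ×ˢ (univ : Set ℝ)))
    (W : EuclideanSpace ℝ (Fin 3) → EuclideanSpace ℝ (Fin 5))
    (hW : ∀ x : EuclideanSpace ℝ (Fin 3),
      W x = ![u₁ (rad x) (x 2) * ((x 0 / rad x) ^ 2 - (x 1 / rad x) ^ 2),
              u₁ (rad x) (x 2) * (2 * (x 0 / rad x) * (x 1 / rad x)),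
              u₂ (rad x) (x 2),
              u₃ (rad x) (x 2) * (x 0 / rad x),
              u₃ (rad x) (x 2) * (x 1 / rad x)])
    (x : EuclideanSpace ℝ (Fin 3)) (hx : 0 < (x 0) ^ 2 + (x 1) ^ 2) :
      (∑ i : Fin 5, ∑ α : Fin 3,
          (fderiv ℝ (fun y => W y i) x (EuclideanSpace.single α 1)) ^ 2) =
        ((deriv (fun r => u₁ r (x 2)) (rad x)) ^ 2 +
            (deriv (fun r => u₂ r (x 2)) (rad x)) ^ 2 +
            (deriv (fun r => u₃ r (x 2)) (rad x)) ^ 2) +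
          ((deriv (fun z => u₁ (rad x) z) (x 2)) ^ 2 +
            (deriv (fun z => u₂ (rad x) z) (x 2)) ^ 2 +
            (deriv (fun z => u₃ (rad x) z) (x 2)) ^ 2) +
          (4 * (u₁ (rad x) (x 2)) ^ 2 + (u₃ (rad x) (x 2)) ^ 2) / (rad x) ^ 2 := by
  have hρ : 0 < rad x := Real.sqrt_pos.2 hx
  have hρ2 : (rad x) ^ 2 = (x 0) ^ 2 + (x 1) ^ 2 := Real.sq_sqrt hx.le
  have hopen : IsOpen (Ioi (0:ℝ) ×ˢ (univ : Set ℝ)) := isOpen_Ioi.prod isOpen_univ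
  have hmem : ((rad x, x 2) : ℝ × ℝ) ∈ Ioi (0:ℝ) ×ˢ (univ : Set ℝ) := ⟨hρ, trivial⟩
  have hC : ContDiffAt ℝ 1 (fun p : ℝ × ℝ =>
      (![u₁ p.1 p.2, u₂ p.1 p.2, u₃ p.1 p.2] : Fin 3 → ℝ)) (rad x, x 2) :=
    hu.contDiffAt (hopen.mem_nhds hmem)
  have hC1 : ContDiffAt ℝ 1 (fun p : ℝ × ℝ => u₁ p.1 p.2) (rad x, x 2) := by
    simpa [Function.comp_def] using (ContinuousLinearMap.proj (R := ℝ) (φ := fun _ : Fin 3 => ℝ)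
      0).contDiff.contDiffAt.comp (rad x, x 2) hC
  have hC2 : ContDiffAt ℝ 1 (fun p : ℝ × ℝ => u₂ p.1 p.2) (rad x, x 2) := by
    simpa [Function.comp_def] using (ContinuousLinearMap.proj (R := ℝ) (φ := fun _ : Fin 3 => ℝ)
      1).contDiff.contDiffAt.comp (rad x, x 2) hC
  have hC3 : ContDiffAt ℝ 1 (fun p : ℝ × ℝ => u₃ p.1 p.2) (rad x, x 2) := by
    simpa [Function.comp_def] using (ContinuousLinearMap.proj (R := ℝ) (φ := fun _ : Fin 3 => ℝ)
      2).contDiff.contDiffAt.comp (rad x, x 2) hC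
  set D1 := fderiv ℝ (fun p : ℝ × ℝ => u₁ p.1 p.2) (rad x, x 2) with hD1
  set D2 := fderiv ℝ (fun p : ℝ × ℝ => u₂ p.1 p.2) (rad x, x 2) with hD2
  set D3 := fderiv ℝ (fun p : ℝ × ℝ => u₃ p.1 p.2) (rad x, x 2) with hD3
  have hfd1 : HasFDerivAt (fun p : ℝ × ℝ => u₁ p.1 p.2) D1 (rad x, x 2) :=
    (hC1.differentiableAt one_ne_zero).hasFDerivAt
  have hfd2 : HasFDerivAt (fun p : ℝ × ℝ => u₂ p.1 p.2) D2 (rad x, x 2) :=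
    (hC2.differentiableAt one_ne_zero).hasFDerivAt
  have hfd3 : HasFDerivAt (fun p : ℝ × ℝ => u₃ p.1 p.2) D3 (rad x, x 2) :=
    (hC3.differentiableAt one_ne_zero).hasFDerivAt
  set P1 := D1 (1, 0) with hP1; set Q1 := D1 (0, 1) with hQ1
  set P2 := D2 (1, 0) with hP2; set Q2 := D2 (0, 1) with hQ2
  set P3 := D3 (1, 0) with hP3; set Q3 := D3 (0, 1) with hQ3
  have happ1 : ∀ a b : ℝ, D1 (a, b) = a * P1 + b * Q1 := by
    intro a b
    have h : ((a,b) : ℝ × ℝ) = a • ((1:ℝ),(0:ℝ)) + b • ((0:ℝ),(1:ℝ)) := by simp [Prod.ext_iff]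
    rw [h, map_add, map_smul, map_smul, smul_eq_mul, smul_eq_mul]
  have happ2 : ∀ a b : ℝ, D2 (a, b) = a * P2 + b * Q2 := by
    intro a b
    have h : ((a,b) : ℝ × ℝ) = a • ((1:ℝ),(0:ℝ)) + b • ((0:ℝ),(1:ℝ)) := by simp [Prod.ext_iff]
    rw [h, map_add, map_smul, map_smul, smul_eq_mul, smul_eq_mul]
  have happ3 : ∀ a b : ℝ, D3 (a, b) = a * P3 + b * Q3 := by
    intro a b
    have h : ((a,b) : ℝ × ℝ) = a • ((1:ℝ),(0:ℝ)) + b • ((0:ℝ),(1:ℝ)) := by simp [Prod.ext_iff]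
    rw [h, map_add, map_smul, map_smul, smul_eq_mul, smul_eq_mul]
  -- derivative links for RHS
  have hpr : HasDerivAt (fun r : ℝ => ((r, x 2) : ℝ × ℝ)) ((1:ℝ), (0:ℝ)) (rad x) :=
    (hasDerivAt_id _).prodMk (hasDerivAt_const _ _)
  have hpz : HasDerivAt (fun z : ℝ => ((rad x, z) : ℝ × ℝ)) ((0:ℝ), (1:ℝ)) (x 2) :=
    (hasDerivAt_const _ _).prodMk (hasDerivAt_id _)
  have hd1r : HasDerivAt (fun r => u₁ r (x 2)) P1 (rad x) := hfd1.comp_hasDerivAt (l := fun p : ℝ × ℝ => u₁ p.1 p.2) (rad x) hpr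
  have hd2r : HasDerivAt (fun r => u₂ r (x 2)) P2 (rad x) := hfd2.comp_hasDerivAt (l := fun p : ℝ × ℝ => u₂ p.1 p.2) (rad x) hpr
  have hd3r : HasDerivAt (fun r => u₃ r (x 2)) P3 (rad x) := hfd3.comp_hasDerivAt (l := fun p : ℝ × ℝ => u₃ p.1 p.2) (rad x) hpr
  have hd1z : HasDerivAt (fun z => u₁ (rad x) z) Q1 (x 2) := hfd1.comp_hasDerivAt (l := fun p : ℝ × ℝ => u₁ p.1 p.2) (x 2) hpz
  have hd2z : HasDerivAt (fun z => u₂ (rad x) z) Q2 (x 2) := hfd2.comp_hasDerivAt (l := fun p : ℝ × ℝ => u₂ p.1 p.2) (x 2) hpz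
  have hd3z : HasDerivAt (fun z => u₃ (rad x) z) Q3 (x 2) := hfd3.comp_hasDerivAt (l := fun p : ℝ × ℝ => u₃ p.1 p.2) (x 2) hpz
  -- spatial derivative building blocks
  have hA : HasFDerivAt rad (Ader x) x := hradfd x hx
  have hpair : HasFDerivAt (fun y : EuclideanSpace ℝ (Fin 3) => ((rad y, y 2) : ℝ × ℝ))
      ((Ader x).prod (pr 2)) x := hA.prodMk ((pr 2).hasFDerivAt)
  have hU1 : HasFDerivAt (fun y : EuclideanSpace ℝ (Fin 3) => u₁ (rad y) (y 2))
      (D1.comp ((Ader x).prod (pr 2))) x := hfd1.comp (g := fun p : ℝ × ℝ => u₁ p.1 p.2) x hpair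
  have hU2 : HasFDerivAt (fun y : EuclideanSpace ℝ (Fin 3) => u₂ (rad y) (y 2))
      (D2.comp ((Ader x).prod (pr 2))) x := hfd2.comp (g := fun p : ℝ × ℝ => u₂ p.1 p.2) x hpair
  have hU3 : HasFDerivAt (fun y : EuclideanSpace ℝ (Fin 3) => u₃ (rad y) (y 2))
      (D3.comp ((Ader x).prod (pr 2))) x := hfd3.comp (g := fun p : ℝ × ℝ => u₃ p.1 p.2) x hpair
  have hI : HasFDerivAt (fun y : EuclideanSpace ℝ (Fin 3) => (rad y)⁻¹)
      ((-(rad x ^ 2)⁻¹) • Ader x) x := (hasDerivAt_inv hρ.ne').comp_hasFDerivAt x hA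
  have hcf : HasFDerivAt (fun y : EuclideanSpace ℝ (Fin 3) => y 0 / rad y)
      (x 0 • ((-(rad x ^ 2)⁻¹) • Ader x) + (rad x)⁻¹ • pr 0) x := by
    simp only [div_eq_mul_inv]
    exact ((pr 0).hasFDerivAt (x := x)).mul hI
  have hsf : HasFDerivAt (fun y : EuclideanSpace ℝ (Fin 3) => y 1 / rad y)
      (x 1 • ((-(rad x ^ 2)⁻¹) • Ader x) + (rad x)⁻¹ • pr 1) x := by
    simp only [div_eq_mul_inv]
    exact ((pr 1).hasFDerivAt (x := x)).mul hI
  -- component functions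
  have heq0 : (fun y => W y 0) = fun y : EuclideanSpace ℝ (Fin 3) =>
      u₁ (rad y) (y 2) * ((y 0 / rad y) * (y 0 / rad y) - (y 1 / rad y) * (y 1 / rad y)) := by
    funext y; rw [hW y]; simp [pow_two]
  have heq1 : (fun y => W y 1) = fun y : EuclideanSpace ℝ (Fin 3) =>
      u₁ (rad y) (y 2) * (2 * (y 0 / rad y) * (y 1 / rad y)) := by
    funext y; rw [hW y]; simp
  have heq2 : (fun y => W y 2) = fun y : EuclideanSpace ℝ (Fin 3) =>
      u₂ (rad y) (y 2) := by
    funext y; rw [hW y]; simp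
  have heq3 : (fun y => W y 3) = fun y : EuclideanSpace ℝ (Fin 3) =>
      u₃ (rad y) (y 2) * (y 0 / rad y) := by
    funext y; rw [hW y]; simp
  have heq4 : (fun y => W y 4) = fun y : EuclideanSpace ℝ (Fin 3) =>
      u₃ (rad y) (y 2) * (y 1 / rad y) := by
    funext y; rw [hW y]; simp
  have hWd0 : HasFDerivAt (fun y : EuclideanSpace ℝ (Fin 3) => u₁ (rad y) (y 2) * ((y 0 / rad y) * (y 0 / rad y) - (y 1 / rad y) * (y 1 / rad y))) _ x := hU1.mul ((hcf.mul hcf).sub (hsf.mul hsf))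
  have hWd1 : HasFDerivAt (fun y : EuclideanSpace ℝ (Fin 3) => u₁ (rad y) (y 2) * (2 * (y 0 / rad y) * (y 1 / rad y))) _ x := hU1.mul (((hcf.const_mul (2:ℝ)).mul hsf))
  have hWd2 := hU2
  have hWd3 : HasFDerivAt (fun y : EuclideanSpace ℝ (Fin 3) => u₃ (rad y) (y 2) * (y 0 / rad y)) _ x := hU3.mul hcf
  have hWd4 : HasFDerivAt (fun y : EuclideanSpace ℝ (Fin 3) => u₃ (rad y) (y 2) * (y 1 / rad y)) _ x := hU3.mul hsf
  have d00 : fderiv ℝ (fun y => W y 0) x (EuclideanSpace.single 0 1) = P1*(x 0)*((x 0)^2-(x 1)^2)/(rad x)^3 + 2*(u₁ (rad x) (x 2))*(x 0)*((rad x)^2-(x 0)^2+(x 1)^2)/(rad x)^4 := by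
    rw [heq0, hWd0.fderiv]
    simp only [ContinuousLinearMap.add_apply, ContinuousLinearMap.smul_apply,
      ContinuousLinearMap.sub_apply, ContinuousLinearMap.neg_apply,
      ContinuousLinearMap.coe_comp', Function.comp_apply, ContinuousLinearMap.prod_apply,
      Ader, PiLp.proj_apply, EuclideanSpace.single_apply, smul_eq_mul, happ1, happ2, happ3]
    simp only [Fin.isValue, Matrix.cons_val_zero, Matrix.cons_val_one, Matrix.head_cons,
      Fin.reduceEq, if_true, if_false, ite_true, ite_false, reduceIte, mul_zero, zero_mul,
      mul_one, one_mul, add_zero, zero_add, neg_zero, sub_zero, zero_sub, neg_mul, mul_neg, neg_neg]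
    try field_simp
    try ring
  have d01 : fderiv ℝ (fun y => W y 0) x (EuclideanSpace.single 1 1) = P1*(x 1)*((x 0)^2-(x 1)^2)/(rad x)^3 - 2*(u₁ (rad x) (x 2))*(x 1)*((rad x)^2+(x 0)^2-(x 1)^2)/(rad x)^4 := by
    rw [heq0, hWd0.fderiv]
    simp only [ContinuousLinearMap.add_apply, ContinuousLinearMap.smul_apply,
      ContinuousLinearMap.sub_apply, ContinuousLinearMap.neg_apply,
      ContinuousLinearMap.coe_comp', Function.comp_apply, ContinuousLinearMap.prod_apply,
      Ader, PiLp.proj_apply, EuclideanSpace.single_apply, smul_eq_mul, happ1, happ2, happ3]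
    simp only [Fin.isValue, Matrix.cons_val_zero, Matrix.cons_val_one, Matrix.head_cons,
      Fin.reduceEq, if_true, if_false, ite_true, ite_false, reduceIte, mul_zero, zero_mul,
      mul_one, one_mul, add_zero, zero_add, neg_zero, sub_zero, zero_sub, neg_mul, mul_neg, neg_neg]
    try field_simp
    try ring
  have d02 : fderiv ℝ (fun y => W y 0) x (EuclideanSpace.single 2 1) = Q1*((x 0)^2-(x 1)^2)/(rad x)^2 := by
    rw [heq0, hWd0.fderiv]
    simp only [ContinuousLinearMap.add_apply, ContinuousLinearMap.smul_apply,
      ContinuousLinearMap.sub_apply, ContinuousLinearMap.neg_apply,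
      ContinuousLinearMap.coe_comp', Function.comp_apply, ContinuousLinearMap.prod_apply,
      Ader, PiLp.proj_apply, EuclideanSpace.single_apply, smul_eq_mul, happ1, happ2, happ3]
    simp only [Fin.isValue, Matrix.cons_val_zero, Matrix.cons_val_one, Matrix.head_cons,
      Fin.reduceEq, if_true, if_false, ite_true, ite_false, reduceIte, mul_zero, zero_mul,
      mul_one, one_mul, add_zero, zero_add, neg_zero, sub_zero, zero_sub, neg_mul, mul_neg, neg_neg]
    try field_simp
    try ring
  have d10 : fderiv ℝ (fun y => W y 1) x (EuclideanSpace.single 0 1) = 2*P1*(x 0)^2*(x 1)/(rad x)^3 + 2*(u₁ (rad x) (x 2))*(x 1)*((rad x)^2-2*(x 0)^2)/(rad x)^4 := by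
    rw [heq1, hWd1.fderiv]
    simp only [ContinuousLinearMap.add_apply, ContinuousLinearMap.smul_apply,
      ContinuousLinearMap.sub_apply, ContinuousLinearMap.neg_apply,
      ContinuousLinearMap.coe_comp', Function.comp_apply, ContinuousLinearMap.prod_apply,
      Ader, PiLp.proj_apply, EuclideanSpace.single_apply, smul_eq_mul, happ1, happ2, happ3]
    simp only [Fin.isValue, Matrix.cons_val_zero, Matrix.cons_val_one, Matrix.head_cons,
      Fin.reduceEq, if_true, if_false, ite_true, ite_false, reduceIte, mul_zero, zero_mul,
      mul_one, one_mul, add_zero, zero_add, neg_zero, sub_zero, zero_sub, neg_mul, mul_neg, neg_neg]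
    try field_simp
    try ring
  have d11 : fderiv ℝ (fun y => W y 1) x (EuclideanSpace.single 1 1) = 2*P1*(x 0)*(x 1)^2/(rad x)^3 + 2*(u₁ (rad x) (x 2))*(x 0)*((rad x)^2-2*(x 1)^2)/(rad x)^4 := by
    rw [heq1, hWd1.fderiv]
    simp only [ContinuousLinearMap.add_apply, ContinuousLinearMap.smul_apply,
      ContinuousLinearMap.sub_apply, ContinuousLinearMap.neg_apply,
      ContinuousLinearMap.coe_comp', Function.comp_apply, ContinuousLinearMap.prod_apply,
      Ader, PiLp.proj_apply, EuclideanSpace.single_apply, smul_eq_mul, happ1, happ2, happ3]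
    simp only [Fin.isValue, Matrix.cons_val_zero, Matrix.cons_val_one, Matrix.head_cons,
      Fin.reduceEq, if_true, if_false, ite_true, ite_false, reduceIte, mul_zero, zero_mul,
      mul_one, one_mul, add_zero, zero_add, neg_zero, sub_zero, zero_sub, neg_mul, mul_neg, neg_neg]
    try field_simp
    try ring
  have d12 : fderiv ℝ (fun y => W y 1) x (EuclideanSpace.single 2 1) = 2*Q1*(x 0)*(x 1)/(rad x)^2 := by
    rw [heq1, hWd1.fderiv]
    simp only [ContinuousLinearMap.add_apply, ContinuousLinearMap.smul_apply,
      ContinuousLinearMap.sub_apply, ContinuousLinearMap.neg_apply,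
      ContinuousLinearMap.coe_comp', Function.comp_apply, ContinuousLinearMap.prod_apply,
      Ader, PiLp.proj_apply, EuclideanSpace.single_apply, smul_eq_mul, happ1, happ2, happ3]
    simp only [Fin.isValue, Matrix.cons_val_zero, Matrix.cons_val_one, Matrix.head_cons,
      Fin.reduceEq, if_true, if_false, ite_true, ite_false, reduceIte, mul_zero, zero_mul,
      mul_one, one_mul, add_zero, zero_add, neg_zero, sub_zero, zero_sub, neg_mul, mul_neg, neg_neg]
    try field_simp
    try ring
  have d20 : fderiv ℝ (fun y => W y 2) x (EuclideanSpace.single 0 1) = P2*(x 0)/(rad x) := by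
    rw [heq2, hWd2.fderiv]
    simp only [ContinuousLinearMap.add_apply, ContinuousLinearMap.smul_apply,
      ContinuousLinearMap.sub_apply, ContinuousLinearMap.neg_apply,
      ContinuousLinearMap.coe_comp', Function.comp_apply, ContinuousLinearMap.prod_apply,
      Ader, PiLp.proj_apply, EuclideanSpace.single_apply, smul_eq_mul, happ1, happ2, happ3]
    simp only [Fin.isValue, Matrix.cons_val_zero, Matrix.cons_val_one, Matrix.head_cons,
      Fin.reduceEq, if_true, if_false, ite_true, ite_false, reduceIte, mul_zero, zero_mul,
      mul_one, one_mul, add_zero, zero_add, neg_zero, sub_zero, zero_sub, neg_mul, mul_neg, neg_neg]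
    try field_simp
    try ring
  have d21 : fderiv ℝ (fun y => W y 2) x (EuclideanSpace.single 1 1) = P2*(x 1)/(rad x) := by
    rw [heq2, hWd2.fderiv]
    simp only [ContinuousLinearMap.add_apply, ContinuousLinearMap.smul_apply,
      ContinuousLinearMap.sub_apply, ContinuousLinearMap.neg_apply,
      ContinuousLinearMap.coe_comp', Function.comp_apply, ContinuousLinearMap.prod_apply,
      Ader, PiLp.proj_apply, EuclideanSpace.single_apply, smul_eq_mul, happ1, happ2, happ3]
    simp only [Fin.isValue, Matrix.cons_val_zero, Matrix.cons_val_one, Matrix.head_cons,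
      Fin.reduceEq, if_true, if_false, ite_true, ite_false, reduceIte, mul_zero, zero_mul,
      mul_one, one_mul, add_zero, zero_add, neg_zero, sub_zero, zero_sub, neg_mul, mul_neg, neg_neg]
    try field_simp
    try ring
  have d22 : fderiv ℝ (fun y => W y 2) x (EuclideanSpace.single 2 1) = Q2 := by
    rw [heq2, hWd2.fderiv]
    simp only [ContinuousLinearMap.add_apply, ContinuousLinearMap.smul_apply,
      ContinuousLinearMap.sub_apply, ContinuousLinearMap.neg_apply,
      ContinuousLinearMap.coe_comp', Function.comp_apply, ContinuousLinearMap.prod_apply,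
      Ader, PiLp.proj_apply, EuclideanSpace.single_apply, smul_eq_mul, happ1, happ2, happ3]
    simp only [Fin.isValue, Matrix.cons_val_zero, Matrix.cons_val_one, Matrix.head_cons,
      Fin.reduceEq, if_true, if_false, ite_true, ite_false, reduceIte, mul_zero, zero_mul,
      mul_one, one_mul, add_zero, zero_add, neg_zero, sub_zero, zero_sub, neg_mul, mul_neg, neg_neg]
    try field_simp
    try ring
  have d30 : fderiv ℝ (fun y => W y 3) x (EuclideanSpace.single 0 1) = P3*(x 0)^2/(rad x)^2 + (u₃ (rad x) (x 2))*((rad x)^2-(x 0)^2)/(rad x)^3 := by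
    rw [heq3, hWd3.fderiv]
    simp only [ContinuousLinearMap.add_apply, ContinuousLinearMap.smul_apply,
      ContinuousLinearMap.sub_apply, ContinuousLinearMap.neg_apply,
      ContinuousLinearMap.coe_comp', Function.comp_apply, ContinuousLinearMap.prod_apply,
      Ader, PiLp.proj_apply, EuclideanSpace.single_apply, smul_eq_mul, happ1, happ2, happ3]
    simp only [Fin.isValue, Matrix.cons_val_zero, Matrix.cons_val_one, Matrix.head_cons,
      Fin.reduceEq, if_true, if_false, ite_true, ite_false, reduceIte, mul_zero, zero_mul,
      mul_one, one_mul, add_zero, zero_add, neg_zero, sub_zero, zero_sub, neg_mul, mul_neg, neg_neg]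
    try field_simp
    try ring
  have d31 : fderiv ℝ (fun y => W y 3) x (EuclideanSpace.single 1 1) = P3*(x 0)*(x 1)/(rad x)^2 - (u₃ (rad x) (x 2))*(x 0)*(x 1)/(rad x)^3 := by
    rw [heq3, hWd3.fderiv]
    simp only [ContinuousLinearMap.add_apply, ContinuousLinearMap.smul_apply,
      ContinuousLinearMap.sub_apply, ContinuousLinearMap.neg_apply,
      ContinuousLinearMap.coe_comp', Function.comp_apply, ContinuousLinearMap.prod_apply,
      Ader, PiLp.proj_apply, EuclideanSpace.single_apply, smul_eq_mul, happ1, happ2, happ3]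
    simp only [Fin.isValue, Matrix.cons_val_zero, Matrix.cons_val_one, Matrix.head_cons,
      Fin.reduceEq, if_true, if_false, ite_true, ite_false, reduceIte, mul_zero, zero_mul,
      mul_one, one_mul, add_zero, zero_add, neg_zero, sub_zero, zero_sub, neg_mul, mul_neg, neg_neg]
    try field_simp
    try ring
  have d32 : fderiv ℝ (fun y => W y 3) x (EuclideanSpace.single 2 1) = Q3*(x 0)/(rad x) := by
    rw [heq3, hWd3.fderiv]
    simp only [ContinuousLinearMap.add_apply, ContinuousLinearMap.smul_apply,
      ContinuousLinearMap.sub_apply, ContinuousLinearMap.neg_apply,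
      ContinuousLinearMap.coe_comp', Function.comp_apply, ContinuousLinearMap.prod_apply,
      Ader, PiLp.proj_apply, EuclideanSpace.single_apply, smul_eq_mul, happ1, happ2, happ3]
    simp only [Fin.isValue, Matrix.cons_val_zero, Matrix.cons_val_one, Matrix.head_cons,
      Fin.reduceEq, if_true, if_false, ite_true, ite_false, reduceIte, mul_zero, zero_mul,
      mul_one, one_mul, add_zero, zero_add, neg_zero, sub_zero, zero_sub, neg_mul, mul_neg, neg_neg]
    try field_simp
    try ring
  have d40 : fderiv ℝ (fun y => W y 4) x (EuclideanSpace.single 0 1) = P3*(x 0)*(x 1)/(rad x)^2 - (u₃ (rad x) (x 2))*(x 0)*(x 1)/(rad x)^3 := by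
    rw [heq4, hWd4.fderiv]
    simp only [ContinuousLinearMap.add_apply, ContinuousLinearMap.smul_apply,
      ContinuousLinearMap.sub_apply, ContinuousLinearMap.neg_apply,
      ContinuousLinearMap.coe_comp', Function.comp_apply, ContinuousLinearMap.prod_apply,
      Ader, PiLp.proj_apply, EuclideanSpace.single_apply, smul_eq_mul, happ1, happ2, happ3]
    simp only [Fin.isValue, Matrix.cons_val_zero, Matrix.cons_val_one, Matrix.head_cons,
      Fin.reduceEq, if_true, if_false, ite_true, ite_false, reduceIte, mul_zero, zero_mul,
      mul_one, one_mul, add_zero, zero_add, neg_zero, sub_zero, zero_sub, neg_mul, mul_neg, neg_neg]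
    try field_simp
    try ring
  have d41 : fderiv ℝ (fun y => W y 4) x (EuclideanSpace.single 1 1) = P3*(x 1)^2/(rad x)^2 + (u₃ (rad x) (x 2))*((rad x)^2-(x 1)^2)/(rad x)^3 := by
    rw [heq4, hWd4.fderiv]
    simp only [ContinuousLinearMap.add_apply, ContinuousLinearMap.smul_apply,
      ContinuousLinearMap.sub_apply, ContinuousLinearMap.neg_apply,
      ContinuousLinearMap.coe_comp', Function.comp_apply, ContinuousLinearMap.prod_apply,
      Ader, PiLp.proj_apply, EuclideanSpace.single_apply, smul_eq_mul, happ1, happ2, happ3]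
    simp only [Fin.isValue, Matrix.cons_val_zero, Matrix.cons_val_one, Matrix.head_cons,
      Fin.reduceEq, if_true, if_false, ite_true, ite_false, reduceIte, mul_zero, zero_mul,
      mul_one, one_mul, add_zero, zero_add, neg_zero, sub_zero, zero_sub, neg_mul, mul_neg, neg_neg]
    try field_simp
    try ring
  have d42 : fderiv ℝ (fun y => W y 4) x (EuclideanSpace.single 2 1) = Q3*(x 1)/(rad x) := by
    rw [heq4, hWd4.fderiv]
    simp only [ContinuousLinearMap.add_apply, ContinuousLinearMap.smul_apply,
      ContinuousLinearMap.sub_apply, ContinuousLinearMap.neg_apply,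
      ContinuousLinearMap.coe_comp', Function.comp_apply, ContinuousLinearMap.prod_apply,
      Ader, PiLp.proj_apply, EuclideanSpace.single_apply, smul_eq_mul, happ1, happ2, happ3]
    simp only [Fin.isValue, Matrix.cons_val_zero, Matrix.cons_val_one, Matrix.head_cons,
      Fin.reduceEq, if_true, if_false, ite_true, ite_false, reduceIte, mul_zero, zero_mul,
      mul_one, one_mul, add_zero, zero_add, neg_zero, sub_zero, zero_sub, neg_mul, mul_neg, neg_neg]
    try field_simp
    try ring
  simp only [Fin.sum_univ_five, Fin.sum_univ_three]
  rw [d00, d01, d02, d10, d11, d12, d20, d21, d22, d30, d31, d32, d40, d41, d42,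
    hd1r.deriv, hd2r.deriv, hd3r.deriv, hd1z.deriv, hd2z.deriv, hd3z.deriv]
  linear_combination keylem (x 0) (x 1) (rad x) P1 P2 P3 Q1 Q2 Q3
    (u₁ (rad x) (x 2)) (u₃ (rad x) (x 2)) hρ.ne' hρ2

/-- Off the `z`-axis, the axially symmetric 5-vector field
`w = (u₁ cos 2φ, u₁ sin 2φ, u₂, u₃ cos φ, u₃ sin φ)` (with
`cos φ = x₁/ρ`, `sin φ = x₂/ρ`) is `C¹` and its Dirichlet density satisfies
`Σᵢ ‖∇wᵢ‖² = ‖∂_ρ u‖² + ‖∂_z u‖² + (4u₁² + u₃²)/ρ²`. -/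
theorem stmt14 (u₁ u₂ u₃ : ℝ → ℝ → ℝ)
    (hu : ContDiffOn ℝ 1
      (fun p : ℝ × ℝ => (![u₁ p.1 p.2, u₂ p.1 p.2, u₃ p.1 p.2] : Fin 3 → ℝ))
      (Ioi (0 : ℝ) ×ˢ (univ : Set ℝ)))
    (W : EuclideanSpace ℝ (Fin 3) → EuclideanSpace ℝ (Fin 5))
    (hW : ∀ x : EuclideanSpace ℝ (Fin 3),
      W x = ![u₁ (rad x) (x 2) * ((x 0 / rad x) ^ 2 - (x 1 / rad x) ^ 2),
              u₁ (rad x) (x 2) * (2 * (x 0 / rad x) * (x 1 / rad x)),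
              u₂ (rad x) (x 2),
              u₃ (rad x) (x 2) * (x 0 / rad x),
              u₃ (rad x) (x 2) * (x 1 / rad x)]) :
    ContDiffOn ℝ 1 W {x : EuclideanSpace ℝ (Fin 3) | 0 < (x 0) ^ 2 + (x 1) ^ 2} ∧
    ∀ x : EuclideanSpace ℝ (Fin 3), 0 < (x 0) ^ 2 + (x 1) ^ 2 →
      (∑ i : Fin 5, ∑ α : Fin 3,
          (fderiv ℝ (fun y => W y i) x (EuclideanSpace.single α 1)) ^ 2) =
        ((deriv (fun r => u₁ r (x 2)) (rad x)) ^ 2 +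
            (deriv (fun r => u₂ r (x 2)) (rad x)) ^ 2 +
            (deriv (fun r => u₃ r (x 2)) (rad x)) ^ 2) +
          ((deriv (fun z => u₁ (rad x) z) (x 2)) ^ 2 +
            (deriv (fun z => u₂ (rad x) z) (x 2)) ^ 2 +
            (deriv (fun z => u₃ (rad x) z) (x 2)) ^ 2) +
          (4 * (u₁ (rad x) (x 2)) ^ 2 + (u₃ (rad x) (x 2)) ^ 2) / (rad x) ^ 2 :=
  ⟨part1 u₁ u₂ u₃ hu W hW, fun x hx => part2 u₁ u₂ u₃ hu W hW x hx⟩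
end
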